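/- Let H, R be finite-dimensional complex Hilbert spaces, B = ℂ², and |ψ⟩ a unit vector in H⊗B⊗R. If there exists a matrix M on B⊗R⊗ℂ⁴ with 0 ≤ M ≤ I such that |Tr[M(ρ̄₀ − ρ̄₁)]| = δ > 0, where (ρ̄₀, ρ̄₁) is the candidate EFI pair built from |ψ⟩, then there exists a (1, δ/12)-superdense decoder against |ψ⟩. -/

import Mathlib

open Matrix BigOperators
open scoped ComplexOrder

noncomputable section

namespace BHRD

/-- A (qu)bit index. -/
abbrev Bit := ZMod 2

/-- The Pauli `X` matrix. -/
def Xm : Matrix Bit Bit ℂ := Matrix.of fun i j => if i = j + 1 then 1 else 0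

/-- The Pauli `Z` matrix. -/
def Zm : Matrix Bit Bit ℂ := Matrix.of fun i j => if i = j then (if j = 1 then -1 else 1) else 0

/-- The Pauli mask `X^x Z^z`. -/
def pauli (x z : Bit) : Matrix Bit Bit ℂ := Xm ^ x.val * Zm ^ z.val

/-- The EPR vector `(|00⟩+|11⟩)/√2`. -/
def epr : Bit × Bit → ℂ := fun p => if p.1 = p.2 then (((Real.sqrt 2 : ℝ) : ℂ))⁻¹ else 0

variable {dH dR : ℕ}

/-- The reduced density matrix of `|ψ⟩ ∈ H ⊗ B ⊗ R` on `B ⊗ R`, i.e. `Tr_H |ψ⟩⟨ψ|`. -/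
def rhoBR (ψ : Fin dH × Bit × Fin dR → ℂ) :
    Matrix (Bit × Fin dR) (Bit × Fin dR) ℂ :=
  Matrix.of fun p q => ∑ h : Fin dH, ψ (h, p) * (starRingEnd ℂ) (ψ (h, q))

/-- `(X^x Z^z) ⊗ I_R` acting on `B ⊗ R`. -/
def maskB (dR : ℕ) (x z : Bit) : Matrix (Bit × Fin dR) (Bit × Fin dR) ℂ :=
  Matrix.of fun p q => if p.2 = q.2 then pauli x z p.1 q.1 else 0

/-- The masked state `ρ^{xz} = (X^x Z^z ⊗ I) Tr_H|ψ⟩⟨ψ| (X^x Z^z ⊗ I)†`. -/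
def rhoXZ (ψ : Fin dH × Bit × Fin dR → ℂ) (x z : Bit) :
    Matrix (Bit × Fin dR) (Bit × Fin dR) ℂ :=
  maskB dR x z * rhoBR ψ * (maskB dR x z)ᴴ

/-- `K` is a family of Kraus operators for a (trace-preserving) quantum channel. -/
def IsKraus {α β : Type*} [Fintype α] [Fintype β] [DecidableEq β] {k : ℕ}
    (K : Fin k → Matrix α β ℂ) : Prop :=
  ∑ i, (K i)ᴴ * K i = 1

/-- Application of the channel with Kraus operators `K` to a state `ρ`. -/
def applyCh {α β : Type*} [Fintype α] [Fintype β] {k : ℕ}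
    (K : Fin k → Matrix α β ℂ) (ρ : Matrix β β ℂ) : Matrix α α ℂ :=
  ∑ i, K i * ρ * (K i)ᴴ

/-- The extension `id_B ⊗ A` of a channel `A : R → D ⊗ F` given by a Kraus operator `K`:
a Kraus operator from `B ⊗ R` to `B ⊗ D ⊗ F`. -/
def extB (K : Matrix (Bit × Bit) (Fin dR) ℂ) :
    Matrix (Bit × Bit × Bit) (Bit × Fin dR) ℂ :=
  Matrix.of fun p q => if p.1 = q.1 then K p.2 q.2 else 0

/-- The projector `I_{B⊗D} ⊗ |0⟩⟨0|_F` on `B ⊗ D ⊗ F`. -/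
def PF0 : Matrix (Bit × Bit × Bit) (Bit × Bit × Bit) ℂ :=
  Matrix.of fun p q =>
    if p.1 = q.1 ∧ p.2.1 = q.2.1 ∧ p.2.2 = 0 ∧ q.2.2 = 0 then 1 else 0

/-- The projector `|epr⟩⟨epr|_{B⊗D} ⊗ |0⟩⟨0|_F` on `B ⊗ D ⊗ F`. -/
def Pepr0 : Matrix (Bit × Bit × Bit) (Bit × Bit × Bit) ℂ :=
  Matrix.of fun p q =>
    (if p.2.2 = 0 ∧ q.2.2 = 0 then 1 else 0) *
      (epr (p.1, p.2.1) * (starRingEnd ℂ) (epr (q.1, q.2.1)))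

/-- `K` is (the Kraus family of) a `(γ,ε)`-radiation decoder against `ψ`. -/
def IsRadDecoder (ψ : Fin dH × Bit × Fin dR → ℂ) (γ ε : ℝ) {k : ℕ}
    (K : Fin k → Matrix (Bit × Bit) (Fin dR) ℂ) : Prop :=
  IsKraus K ∧
  γ ≤ ((PF0 * applyCh (fun i => extB (K i)) (rhoBR ψ)).trace).re ∧
  ((PF0 * applyCh (fun i => extB (K i)) (rhoBR ψ)).trace).re * (1/4 + (3/4) * ε) ≤
    ((Pepr0 * applyCh (fun i => extB (K i)) (rhoBR ψ)).trace).re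

/-- The projector `I_P ⊗ |0⟩⟨0|_F` on `P ⊗ F`. -/
def QF0 : Matrix ((Bit × Bit) × Bit) ((Bit × Bit) × Bit) ℂ :=
  Matrix.of fun p q => if p.1 = q.1 ∧ p.2 = 0 ∧ q.2 = 0 then 1 else 0

/-- The projector `|x,z⟩⟨x,z|_P ⊗ |0⟩⟨0|_F` on `P ⊗ F`. -/
def Qxz0 (x z : Bit) : Matrix ((Bit × Bit) × Bit) ((Bit × Bit) × Bit) ℂ :=
  Matrix.of fun p q => if p = ((x, z), 0) ∧ q = ((x, z), 0) then 1 else 0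

/-- `K` is (the Kraus family of) a `(γ,ε)`-superdense decoder against `ψ`. -/
def IsSupDecoder (ψ : Fin dH × Bit × Fin dR → ℂ) (γ ε : ℝ) {k : ℕ}
    (K : Fin k → Matrix ((Bit × Bit) × Bit) (Bit × Fin dR) ℂ) : Prop :=
  IsKraus K ∧
  γ ≤ (1/4) * ∑ x : Bit, ∑ z : Bit, ((QF0 * applyCh K (rhoXZ ψ x z)).trace).re ∧
  ((1/4) * ∑ x : Bit, ∑ z : Bit, ((QF0 * applyCh K (rhoXZ ψ x z)).trace).re) *
      (1/4 + (3/4) * ε) ≤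
    (1/4) * ∑ x : Bit, ∑ z : Bit, ((Qxz0 x z * applyCh K (rhoXZ ψ x z)).trace).re

end BHRD

namespace BHRD

variable {dH dR : ℕ}

/-- The candidate EFI state `ρ̄₀ = (1/4)·Σ_{x,z} ρ^{xz} ⊗ |x,z⟩⟨x,z|` on `B ⊗ R ⊗ ℂ⁴`. -/
def rbar0 (ψ : Fin dH × Bit × Fin dR → ℂ) :
    Matrix ((Bit × Fin dR) × Bit × Bit) ((Bit × Fin dR) × Bit × Bit) ℂ :=
  (1/4 : ℂ) • ∑ x : Bit, ∑ z : Bit,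
    Matrix.of fun p q =>
      (if p.2 = (x, z) ∧ q.2 = (x, z) then 1 else 0) * rhoXZ ψ x z p.1 q.1

/-- The candidate EFI state `ρ̄₁ = ((1/4)·Σ_{x,z} ρ^{xz}) ⊗ (I₄/4)` on `B ⊗ R ⊗ ℂ⁴`. -/
def rbar1 (ψ : Fin dH × Bit × Fin dR → ℂ) :
    Matrix ((Bit × Fin dR) × Bit × Bit) ((Bit × Fin dR) × Bit × Bit) ℂ :=
  (1/16 : ℂ) • ∑ x : Bit, ∑ z : Bit,
    Matrix.of fun p q =>
      (if p.2 = q.2 then 1 else 0) * rhoXZ ψ x z p.1 q.1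

end BHRD

/-!
Split the distinguishing effect `0 ≤ M ≤ 1` on `B ⊗ R ⊗ ℂ⁴` into its diagonal blocks `M_c`,
`c ∈ {0,1}²`: then `Tr[M ρ̄₀] = ¼ Σ_{xz} Tr[M_{xz} ρ^{xz}]` and
`Tr[M ρ̄₁] = 1/16 Σ_{xz} Σ_c Tr[M_c ρ^{xz}]`. The decoder guesses `c` uniformly, measures
`{M_c, 1 - M_c}`, and announces `c` if accepted and a uniformly random other value otherwise.
It always sets the flag `F` to `0`, and on `ρ^{xz}` it announces `xz` with probability
`¼ + ⅓ Tr[M_{xz} ρ^{xz}] - 1/12 Σ_c Tr[M_c ρ^{xz}]`, which averages to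
`¼ + ⅓ Tr[M (ρ̄₀ - ρ̄₁)]`. Since `Tr ρ̄₀ = Tr ρ̄₁`, replacing `M` by `1 - M` if necessary makes
this `¼ + δ/3 ≥ ¼ + ¾ · δ/12`.
-/

namespace BHRD

section Blocks

variable {n ι R : Type*} [DecidableEq ι] [Semiring R]

def diagBlock (M : Matrix (n × ι) (n × ι) R) (c : ι) : Matrix n n R :=
  M.submatrix (·, c) (·, c)

lemma diagBlock_one [DecidableEq n] (c : ι) : diagBlock (1 : Matrix (n × ι) (n × ι) R) c = 1 :=
  submatrix_one_embedding ⟨(·, c), fun _ _ h => congrArg Prod.fst h⟩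

variable [Fintype n] [Fintype ι]

lemma trace_mul_of_corner (M : Matrix (n × ι) (n × ι) R) (ρ : Matrix n n R) (c : ι) :
    (M * of fun p q : n × ι => (if p.2 = c ∧ q.2 = c then 1 else 0) * ρ p.1 q.1).trace
      = (diagBlock M c * ρ).trace := by
  simp [trace, mul_apply, diagBlock, Fintype.sum_prod_type, ite_and]

lemma trace_mul_of_blockDiag (M : Matrix (n × ι) (n × ι) R) (ρ : Matrix n n R) :
    (M * of fun p q : n × ι => (if p.2 = q.2 then 1 else 0) * ρ p.1 q.1).trace
      = ∑ c, (diagBlock M c * ρ).trace := by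
  simp only [trace, diag_apply, mul_apply, of_apply, ite_mul, one_mul, zero_mul, mul_ite,
    mul_zero, Fintype.sum_prod_type, Finset.sum_ite_eq', Finset.mem_univ, if_true, diagBlock,
    submatrix_apply]
  exact Finset.sum_comm

end Blocks

section MeasurePrepare

variable {α n ι : Type*} [Fintype α] [DecidableEq α] [Fintype n] [DecidableEq n] [Fintype ι]

open scoped MatrixOrder in
lemma exists_kraus_measurePrepare (E : ι → Matrix n n ℂ) (hE : ∀ o, (E o).PosSemidef)
    (hE1 : ∑ o, E o = 1) (f : ι → α) :
    ∃ (k : ℕ) (K : Fin k → Matrix α n ℂ), IsKraus K ∧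
      ∀ ρ, applyCh K ρ = ∑ o, (E o * ρ).trace • single (f o) (f o) (1 : ℂ) := by
  choose B hB using fun o => CStarAlgebra.nonneg_iff_eq_star_mul_self.mp (hE o).nonneg
  simp only [star_eq_conjTranspose] at hB
  let K : ι × n → Matrix α n ℂ := fun oi => single (f oi.1) oi.2 (1 : ℂ) * B oi.1
  have hK : ∀ o, ∑ i, (K (o, i))ᴴ * K (o, i) = E o := fun o => by
    simp only [K, conjTranspose_mul, conjTranspose_single, star_one, Matrix.mul_assoc,
      ← Matrix.mul_assoc (single _ _ _), single_mul_single_same, mul_one]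
    rw [← Finset.mul_sum, ← Finset.sum_mul, sum_single_one, Matrix.one_mul, hB]
  have hKρ : ∀ ρ o, ∑ i, K (o, i) * ρ * (K (o, i))ᴴ
      = (E o * ρ).trace • single (f o) (f o) (1 : ℂ) := fun ρ o => by
    have hi : ∀ i, K (o, i) * ρ * (K (o, i))ᴴ
        = (B o * ρ * (B o)ᴴ) i i • single (f o) (f o) (1 : ℂ) := fun i => by
      rw [conjTranspose_mul, conjTranspose_single, star_one, ← Matrix.mul_assoc,
        Matrix.mul_assoc _ (B o) ρ, Matrix.mul_assoc _ (B o * ρ), single_mul_mul_single, one_mul,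
        mul_one, smul_single, smul_eq_mul, mul_one]
    rw [Finset.sum_congr rfl fun i _ => hi i, ← Finset.sum_smul, hB, ← trace_mul_cycle]
    rfl
  let e := Fintype.equivFin (ι × n)
  refine ⟨_, K ∘ e.symm, ?_, fun ρ => ?_⟩
  · refine (e.symm.sum_comp fun oi => (K oi)ᴴ * K oi).trans ?_
    rw [Fintype.sum_prod_type]
    simp only [hK, hE1]
  · refine (e.symm.sum_comp fun oi => K oi * ρ * (K oi)ᴴ).trans ?_
    rw [Fintype.sum_prod_type]
    simp only [hKρ]

lemma trace_mul_sum_smul_single (Q : Matrix α α ℂ) (t : ι → ℂ) (f : ι → α) :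
    (Q * ∑ o, t o • single (f o) (f o) (1 : ℂ)).trace = ∑ o, t o * Q (f o) (f o) := by
  simp [Finset.mul_sum, trace_sum, trace_mul_single, mul_comm]

end MeasurePrepare

lemma sum_ite_eq_sum_add_sub {G M : Type*} [Fintype G] [DecidableEq G] [AddCommGroup M]
    (g : G) (a b : G → M) : ∑ m, (if m = g then a m else b m) = ∑ m, b m + (a g - b g) := by
  have h : ∀ m, (if m = g then a m else b m) = b m + if m = g then a m - b m else 0 := fun m => by
    split_ifs <;> abel
  simp only [h, Finset.sum_add_distrib, Finset.sum_ite_eq', Finset.mem_univ, if_true]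

section GuessPOVM

variable {G n : Type*} [Fintype G] [DecidableEq G] [DecidableEq n]

/-- Guess `m` uniformly, test it with `{A m, 1 - A m}`, and announce `m` on acceptance or a
uniformly random `g ≠ m` on rejection; outcome `(m, g)` records the guess and the announcement. -/
def guessPOVM (A : G → Matrix n n ℂ) (o : G × G) : Matrix n n ℂ :=
  if o.1 = o.2 then (Fintype.card G : ℝ)⁻¹ • A o.1
  else ((Fintype.card G : ℝ) * (Fintype.card G - 1))⁻¹ • (1 - A o.1)

variable {A : G → Matrix n n ℂ}

lemma guessPOVM_posSemidef (hG : 1 < Fintype.card G) (hA : ∀ m, (A m).PosSemidef)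
    (hA1 : ∀ m, (1 - A m).PosSemidef) (o : G × G) : (guessPOVM A o).PosSemidef := by
  have hN : (1 : ℝ) ≤ Fintype.card G := by exact_mod_cast hG.le
  unfold guessPOVM
  split_ifs
  · exact (hA _).smul (by positivity)
  · exact (hA1 _).smul (inv_nonneg.mpr (mul_nonneg (by positivity) (by linarith)))

lemma sum_guessPOVM (hG : 1 < Fintype.card G) : ∑ o, guessPOVM A o = 1 := by
  have hN : (Fintype.card G : ℝ) ≠ 0 := by positivity
  have hN1 : (Fintype.card G : ℝ) - 1 ≠ 0 := sub_ne_zero.mpr (by exact_mod_cast hG.ne')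
  have hrow : ∀ m, ∑ g, guessPOVM A (m, g) = (Fintype.card G : ℝ)⁻¹ • 1 := fun m => by
    simp only [guessPOVM, eq_comm (a := m)]
    rw [sum_ite_eq_sum_add_sub, Finset.sum_const, Finset.card_univ]
    have hq : ((Fintype.card G : ℝ) - 1) * ((Fintype.card G : ℝ) * (Fintype.card G - 1))⁻¹
        = (Fintype.card G : ℝ)⁻¹ := by field_simp
    rw [← hq]
    module
  rw [Fintype.sum_prod_type, Finset.sum_congr rfl fun m _ => hrow m, Finset.sum_const,
    Finset.card_univ, ← Nat.cast_smul_eq_nsmul ℝ, smul_smul, mul_inv_cancel₀ hN, one_smul]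

lemma sum_trace_guessPOVM_mul [Fintype n] (hG : 1 < Fintype.card G) (g : G) (ρ : Matrix n n ℂ) :
    ∑ m, (guessPOVM A (m, g) * ρ).trace
      = (Fintype.card G : ℂ)⁻¹ * ρ.trace + ((Fintype.card G : ℂ) - 1)⁻¹ * (A g * ρ).trace
        - ((Fintype.card G : ℂ) * (Fintype.card G - 1))⁻¹ * ∑ m, (A m * ρ).trace := by
  have hN : (Fintype.card G : ℂ) ≠ 0 := by positivity
  have hN1 : (Fintype.card G : ℂ) - 1 ≠ 0 := sub_ne_zero.mpr (by exact_mod_cast hG.ne')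
  simp only [guessPOVM, ite_mul, apply_ite trace, smul_mul, trace_smul, Matrix.sub_mul,
    Matrix.one_mul, trace_sub, Complex.real_smul]
  rw [sum_ite_eq_sum_add_sub, ← Finset.mul_sum, Finset.sum_sub_distrib, Finset.sum_const,
    Finset.card_univ, nsmul_eq_mul]
  push_cast
  field_simp
  ring

end GuessPOVM

lemma exists_effect_re_trace_mul_eq_abs {n : Type*} [Fintype n] [DecidableEq n]
    {Δ M : Matrix n n ℂ} (hΔ : Δ.trace = 0) (hM : M.PosSemidef) (hM1 : (1 - M).PosSemidef) :
    ∃ M' : Matrix n n ℂ, M'.PosSemidef ∧ (1 - M').PosSemidef ∧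
      ((M' * Δ).trace).re = |((M * Δ).trace).re| := by
  rcases abs_cases ((M * Δ).trace.re) with ⟨h, _⟩ | ⟨h, _⟩
  · exact ⟨M, hM, hM1, h.symm⟩
  · refine ⟨1 - M, hM1, by rwa [sub_sub_cancel], ?_⟩
    rw [h, Matrix.sub_mul, Matrix.one_mul, trace_sub, hΔ, zero_sub, Complex.neg_re]

lemma sum_bit {M : Type*} [AddCommMonoid M] (f : Bit → M) : ∑ b, f b = f 0 + f 1 :=
  Fin.sum_univ_two f

lemma bit_cases (b : Bit) : b = 0 ∨ b = 1 := by
  revert b; decide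

lemma Xm_mem_unitary : Xm ∈ unitary (Matrix Bit Bit ℂ) := by
  rw [Unitary.mem_iff, star_eq_conjTranspose]
  constructor <;> ext i j <;> simp only [mul_apply, conjTranspose_apply, Xm, of_apply, sum_bit] <;>
    rcases bit_cases i with rfl | rfl <;> rcases bit_cases j with rfl | rfl <;> simp +decide

lemma Zm_mem_unitary : Zm ∈ unitary (Matrix Bit Bit ℂ) := by
  rw [Unitary.mem_iff, star_eq_conjTranspose]
  constructor <;> ext i j <;> simp only [mul_apply, conjTranspose_apply, Zm, of_apply, sum_bit] <;>
    rcases bit_cases i with rfl | rfl <;> rcases bit_cases j with rfl | rfl <;> simp +decide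

lemma pauli_mem_unitary (x z : Bit) : pauli x z ∈ unitary (Matrix Bit Bit ℂ) :=
  mul_mem (pow_mem Xm_mem_unitary _) (pow_mem Zm_mem_unitary _)

open scoped Kronecker in
lemma maskB_eq_kronecker (dR : ℕ) (x z : Bit) : maskB dR x z = pauli x z ⊗ₖ 1 := by
  ext p q
  simp [maskB, one_apply]

lemma conjTranspose_maskB_mul_self (dR : ℕ) (x z : Bit) :
    (maskB dR x z)ᴴ * maskB dR x z = 1 := by
  rw [maskB_eq_kronecker, conjTranspose_kronecker, ← mul_kronecker_mul, conjTranspose_one,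
    one_mul, ← star_eq_conjTranspose, Unitary.star_mul_self_of_mem (pauli_mem_unitary x z),
    one_kronecker_one]

section States

variable {dH dR : ℕ}

lemma trace_rhoBR {ψ : Fin dH × Bit × Fin dR → ℂ} (hψ : ∑ p, Complex.normSq (ψ p) = 1) :
    (rhoBR ψ).trace = 1 := by
  simp only [trace, diag_apply, rhoBR, of_apply, Complex.mul_conj]
  rw [Finset.sum_comm, ← Fintype.sum_prod_type', ← Complex.ofReal_sum, hψ, Complex.ofReal_one]

lemma trace_rhoXZ {ψ : Fin dH × Bit × Fin dR → ℂ} (hψ : ∑ p, Complex.normSq (ψ p) = 1)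
    (x z : Bit) : (rhoXZ ψ x z).trace = 1 := by
  rw [rhoXZ, trace_mul_cycle, conjTranspose_maskB_mul_self, one_mul, trace_rhoBR hψ]

lemma trace_mul_rbar0 (M : Matrix ((Bit × Fin dR) × Bit × Bit) ((Bit × Fin dR) × Bit × Bit) ℂ)
    (ψ : Fin dH × Bit × Fin dR → ℂ) :
    (M * rbar0 ψ).trace = 4⁻¹ * ∑ x, ∑ z, (diagBlock M (x, z) * rhoXZ ψ x z).trace := by
  simp only [rbar0, Matrix.mul_smul, trace_smul, Finset.mul_sum, trace_sum, trace_mul_of_corner,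
    smul_eq_mul, one_div]

lemma trace_mul_rbar1 (M : Matrix ((Bit × Fin dR) × Bit × Bit) ((Bit × Fin dR) × Bit × Bit) ℂ)
    (ψ : Fin dH × Bit × Fin dR → ℂ) :
    (M * rbar1 ψ).trace = 16⁻¹ * ∑ x, ∑ z, ∑ c, (diagBlock M c * rhoXZ ψ x z).trace := by
  simp only [rbar1, Matrix.mul_smul, trace_smul, Finset.mul_sum, trace_sum,
    trace_mul_of_blockDiag, smul_eq_mul, one_div]

lemma trace_rbar0_sub_rbar1 (ψ : Fin dH × Bit × Fin dR → ℂ) :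
    (rbar0 ψ - rbar1 ψ).trace = 0 := by
  have h0 := trace_mul_rbar0 1 ψ
  have h1 := trace_mul_rbar1 1 ψ
  simp only [Matrix.one_mul, diagBlock_one, Finset.sum_const, Finset.card_univ] at h0 h1
  rw [trace_sub, h0, h1]
  simp only [Fintype.card_prod, ZMod.card, nsmul_eq_mul, ← Finset.mul_sum]
  ring

lemma exists_superdenseDecoder_of_effect {ψ : Fin dH × Bit × Fin dR → ℂ}
    (hψ : ∑ p, Complex.normSq (ψ p) = 1)
    {M : Matrix ((Bit × Fin dR) × Bit × Bit) ((Bit × Fin dR) × Bit × Bit) ℂ}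
    (hM : M.PosSemidef) (hM1 : (1 - M).PosSemidef) :
    ∃ (k : ℕ) (S : Fin k → Matrix ((Bit × Bit) × Bit) (Bit × Fin dR) ℂ), IsKraus S ∧
      (1/4) * ∑ x : Bit, ∑ z : Bit, ((QF0 * applyCh S (rhoXZ ψ x z)).trace).re = 1 ∧
      (1/4) * ∑ x : Bit, ∑ z : Bit, ((Qxz0 x z * applyCh S (rhoXZ ψ x z)).trace).re
        = 1/4 + (1/3) * ((M * (rbar0 ψ - rbar1 ψ)).trace).re := by
  have hG : 1 < Fintype.card (Bit × Bit) := by decide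
  have hblock1 : ∀ c, (1 - diagBlock M c).PosSemidef := fun c => by
    rw [← diagBlock_one c]
    exact hM1.submatrix _
  obtain ⟨k, S, hS, hSρ⟩ := exists_kraus_measurePrepare (guessPOVM (diagBlock M))
    (guessPOVM_posSemidef hG (fun c => hM.submatrix _) hblock1) (sum_guessPOVM hG)
    (fun o => (o.2, (0 : Bit)))
  have hQF0 : ∀ x z, (QF0 * applyCh S (rhoXZ ψ x z)).trace = 1 := fun x z => by
    rw [hSρ, trace_mul_sum_smul_single]
    simp only [QF0, of_apply, and_self, if_true, mul_one]
    rw [← trace_sum, ← Finset.sum_mul, sum_guessPOVM hG, Matrix.one_mul, trace_rhoXZ hψ]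
  have hQxz0 : ∀ x z, (Qxz0 x z * applyCh S (rhoXZ ψ x z)).trace
      = 4⁻¹ + 3⁻¹ * (diagBlock M (x, z) * rhoXZ ψ x z).trace
        - 12⁻¹ * ∑ c, (diagBlock M c * rhoXZ ψ x z).trace := fun x z => by
    rw [hSρ, trace_mul_sum_smul_single, Fintype.sum_prod_type, Finset.sum_comm]
    simp only [Qxz0, of_apply, Prod.mk.injEq, and_true, and_self, mul_ite, mul_one, mul_zero,
      Finset.sum_ite_irrel, Finset.sum_const_zero, Finset.sum_ite_eq', Finset.mem_univ, if_true]
    rw [sum_trace_guessPOVM_mul hG, trace_rhoXZ hψ]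
    simp only [Fintype.card_prod, ZMod.card]
    norm_num
  have hsum : ∑ x, ∑ z, (Qxz0 x z * applyCh S (rhoXZ ψ x z)).trace
      = 1 + 4 / 3 * (M * (rbar0 ψ - rbar1 ψ)).trace := by
    rw [Matrix.mul_sub, trace_sub, trace_mul_rbar0, trace_mul_rbar1]
    simp only [hQxz0, Finset.sum_add_distrib, Finset.sum_sub_distrib, ← Finset.mul_sum,
      Finset.sum_const, Finset.card_univ, ZMod.card, nsmul_eq_mul]
    ring
  refine ⟨k, S, hS, ?_, ?_⟩
  · simp only [hQF0, Complex.one_re, Finset.sum_const, Finset.card_univ, ZMod.card, nsmul_eq_mul]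
    norm_num
  · simp only [← Complex.re_sum, hsum, one_div, Complex.add_re, Complex.one_re, Complex.mul_re, Complex.div_ofNat_re,
      Complex.re_ofNat, Complex.div_ofNat_im, Complex.im_ofNat, zero_div, zero_mul, sub_zero]
    ring

end States

theorem efi_distinguisher_implies_superdense_decoder_general
    (dH dR : ℕ)
    (ψ : Fin dH × Bit × Fin dR → ℂ)
    (hψ : ∑ p, Complex.normSq (ψ p) = 1)
    (δ : ℝ)
    (hdist : ∃ M : Matrix ((Bit × Fin dR) × Bit × Bit) ((Bit × Fin dR) × Bit × Bit) ℂ,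
      M.PosSemidef ∧ (1 - M).PosSemidef ∧
      |((M * (rbar0 ψ - rbar1 ψ)).trace).re| = δ) :
    ∃ (k : ℕ) (S : Fin k → Matrix ((Bit × Bit) × Bit) (Bit × Fin dR) ℂ),
      IsSupDecoder ψ 1 (δ / 12) S := by
  obtain ⟨M, hM, hM1, hMδ⟩ := hdist
  obtain ⟨A, hA, hA1, hAδ⟩ := exists_effect_re_trace_mul_eq_abs (trace_rbar0_sub_rbar1 ψ) hM hM1
  obtain ⟨k, S, hS, hg, hsucc⟩ := exists_superdenseDecoder_of_effect hψ hA hA1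
  have hδ : 0 ≤ δ := hMδ ▸ abs_nonneg _
  refine ⟨k, S, hS, hg.ge, ?_⟩
  rw [hg, hsucc, hAδ, hMδ]
  linarith

/-- a distinguisher with advantage `δ > 0` between the candidate EFI
pair `(ρ̄₀, ρ̄₁)` built from `|ψ⟩` yields a `(1, δ/12)`-superdense decoder against `|ψ⟩`. -/
theorem efi_distinguisher_implies_superdense_decoder
    (dH dR : ℕ) (hdH : 1 ≤ dH) (hdR : 1 ≤ dR)
    (ψ : Fin dH × Bit × Fin dR → ℂ)
    (hψ : ∑ p, Complex.normSq (ψ p) = 1)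
    (δ : ℝ) (hδ : 0 < δ)
    (hdist : ∃ M : Matrix ((Bit × Fin dR) × Bit × Bit) ((Bit × Fin dR) × Bit × Bit) ℂ,
      M.PosSemidef ∧ (1 - M).PosSemidef ∧
      |((M * (rbar0 ψ - rbar1 ψ)).trace).re| = δ) :
    ∃ (k : ℕ) (S : Fin k → Matrix ((Bit × Bit) × Bit) (Bit × Fin dR) ℂ),
      IsSupDecoder ψ 1 (δ / 12) S :=
  efi_distinguisher_implies_superdense_decoder_general dH dR ψ hψ δ hdist

end BHRD
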